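/- arXiv:0812.4185 — 2 statements merged into one kernel-verified Lean document; each statement's English description precedes it below -/
import Mathlib

section
/- Consider the chain complex of ℂ-vector spaces 0 → ℂ →^τ ⊕_{a ∈ E₁} ℂ →^σ ⊕_{b ∈ E₂} ℂ →^ρ ℂ → 0, where E₁ and E₂ are the edge sets of alternate edges of a cycle of even length 2n ≥ 4 (so |E₁| = |E₂| = n, and the edges of E₁ ∪ E₂ form a single cycle in which edges of E₁ and E₂ alternate), τ is the diagonal map, ρ sums the coordinates, and σ sends the basis vector 1_a for a ∈ E₁ to 1_{b₁} − 1_{b₂} where b₁, b₂ ∈ E₂ are the two edges of the cycle adjacent to a. Then τ is injective, ker σ = im τ, ker ρ = im σ, and the cokernel of ρ is zero. -/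
/-- For an alternating cycle of even length `2n ≥ 4` with alternate edge
classes `E₁, E₂` (both identified with `ZMod n`, the edge `a_j ∈ E₁` being adjacent to
`b_j, b_{j-1} ∈ E₂`), the complex
`0 → ℂ →τ ⊕_{E₁} ℂ →σ ⊕_{E₂} ℂ →ρ ℂ → 0`
with `τ` the diagonal, `σ(1_a) = 1_{b₁} − 1_{b₂}` for the two neighbours of `a`, and `ρ`
the sum of coordinates, is exact except at the final `ℂ` where moreover `ρ` is surjective:
`τ` is injective, `ker σ = im τ`, and `ker ρ = im σ`. -/
theorem stmt_5 (n : ℕ) [NeZero n] (hn : 2 ≤ n)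
    (τ : ℂ →ₗ[ℂ] (ZMod n → ℂ))
    (σ : (ZMod n → ℂ) →ₗ[ℂ] (ZMod n → ℂ))
    (ρ : (ZMod n → ℂ) →ₗ[ℂ] ℂ)
    (hτ : ∀ (c : ℂ) (i : ZMod n), τ c i = c)
    (hσ : ∀ (f : ZMod n → ℂ) (j : ZMod n), σ f j = f j - f (j + 1))
    (hρ : ∀ f : ZMod n → ℂ, ρ f = ∑ j : ZMod n, f j) :
    Function.Injective τ ∧ Function.Exact τ σ ∧ Function.Exact σ ρ ∧
      Function.Surjective ρ := by
  have hinj : Function.Injective τ := by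
    intro a b hab
    have := congrFun hab 0
    rwa [hτ, hτ] at this
  -- ρ is surjective
  have hsurj : Function.Surjective ρ := by
    intro c
    refine ⟨fun j => if j = 0 then c else 0, ?_⟩
    rw [hρ, Finset.sum_ite_eq' _ (0 : ZMod n)]
    simp
  -- shift reindexing
  have hshift : ∀ f : ZMod n → ℂ, ∑ j : ZMod n, f (j + 1) = ∑ j : ZMod n, f j := by
    intro f
    exact Fintype.sum_equiv (Equiv.addRight (1 : ZMod n)) _ _ (fun j => rfl)
  -- exactness at the middle left
  have hexact1 : Function.Exact τ σ := by
    intro f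
    constructor
    · intro hf
      refine ⟨f 0, ?_⟩
      have hconst : ∀ k : ℕ, f ((k : ℕ) : ZMod n) = f 0 := by
        intro k
        induction k with
        | zero => simp
        | succ m ih =>
          have h2 := congrFun hf ((m : ℕ) : ZMod n)
          rw [hσ] at h2
          simp only [Pi.zero_apply, sub_eq_zero] at h2
          push_cast
          rw [← h2, ih]
      funext j
      rw [hτ]
      have : f ((j.val : ℕ) : ZMod n) = f 0 := hconst j.val
      rw [ZMod.natCast_val, ZMod.cast_id] at this
      exact this.symm
    · rintro ⟨c, rfl⟩
      funext j
      rw [hσ, hτ, hτ, sub_self]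
      rfl
  -- range σ ≤ ker ρ
  have hle : LinearMap.range σ ≤ LinearMap.ker ρ := by
    rintro _ ⟨f, rfl⟩
    rw [LinearMap.mem_ker, hρ]
    have : ∑ j : ZMod n, σ f j = ∑ j : ZMod n, (f j - f (j + 1)) :=
      Finset.sum_congr rfl (fun j _ => hσ f j)
    rw [this, Finset.sum_sub_distrib, hshift, sub_self]
  -- dimension count
  have hdim : Module.finrank ℂ (ZMod n → ℂ) = n := by
    rw [Module.finrank_fintype_fun_eq_card, ZMod.card]
  have hkerσ : LinearMap.ker σ = LinearMap.range τ :=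
    LinearMap.exact_iff.mp hexact1
  have hrkτ : Module.finrank ℂ (LinearMap.range τ) = 1 := by
    have h := LinearMap.finrank_range_add_finrank_ker τ
    have hkτ : LinearMap.ker τ = ⊥ := LinearMap.ker_eq_bot.mpr hinj
    rw [hkτ, finrank_bot, Module.finrank_self] at h
    omega
  have hrkσ : Module.finrank ℂ (LinearMap.range σ) = n - 1 := by
    have h := LinearMap.finrank_range_add_finrank_ker σ
    rw [hkerσ, hrkτ, hdim] at h
    omega
  have hrkρker : Module.finrank ℂ (LinearMap.ker ρ) = n - 1 := by
    have h := LinearMap.finrank_range_add_finrank_ker ρ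
    have : LinearMap.range ρ = ⊤ := LinearMap.range_eq_top.mpr hsurj
    rw [this, finrank_top, Module.finrank_self, hdim] at h
    omega
  have heq : LinearMap.range σ = LinearMap.ker ρ :=
    Submodule.eq_of_le_of_finrank_eq hle (by rw [hrkσ, hrkρker])
  exact ⟨hinj, hexact1, LinearMap.exact_iff.mpr heq.symm, hsurj⟩
end

section
/- In a consistent brane tiling algebra (modeled abstractly): suppose for each pair of tiles j, k in the universal cover there is a well-defined set of minimal paths, all F-term equivalent to each other, and simple loops ω_j commute with paths in the sense u·ω_{h(u)} ∼ ω_{t(u)}·u. If u is a minimal path from i to k, and u factors as u = v·w with v from i to j, then v is minimal. -/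
/-- In a consistent brane tiling (modeled abstractly by a path system with
F-term equivalence `Equiv`, simple loops `ω j` at each tile, transport of simple loops
along paths, and the cancellation property), prefixes of minimal paths are minimal:
if `comp v w` is minimal then `v` is minimal.  Here a path `u` is minimal iff it is not
equivalent to any path of the form `comp z (ω (tgt z))`. -/
theorem stmt_15 (S : Type*) (P : Type*)
    (src tgt : P → S) (comp : P → P → P) (Equiv : P → P → Prop) (ω : S → P)
    (hrefl : ∀ u, Equiv u u) (hsymm : ∀ u v, Equiv u v → Equiv v u)
    (htrans : ∀ u v w, Equiv u v → Equiv v w → Equiv u w)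
    (hsrc_eq : ∀ u v, Equiv u v → src u = src v)
    (htgt_eq : ∀ u v, Equiv u v → tgt u = tgt v)
    (hω_src : ∀ j, src (ω j) = j) (hω_tgt : ∀ j, tgt (ω j) = j)
    (hsrc_comp : ∀ u v, tgt u = src v → src (comp u v) = src u)
    (htgt_comp : ∀ u v, tgt u = src v → tgt (comp u v) = tgt v)
    (hassoc : ∀ u v w, tgt u = src v → tgt v = src w →
      comp (comp u v) w = comp u (comp v w))
    (hcomp_congr : ∀ u u' v, tgt u = src v → Equiv u u' →
      Equiv (comp u v) (comp u' v))
    -- transport of simple loops along paths: `u ω_{h(u)} ∼ ω_{t(u)} u`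
    (htransport : ∀ u, Equiv (comp u (ω (tgt u))) (comp (ω (src u)) u))
    -- consistency / cancellation
    (hcancel : ∀ u v w, tgt u = src w → tgt v = src w →
      Equiv (comp u w) (comp v w) → Equiv u v)
    -- all simple loops at a tile are equivalent and minimal paths between fixed
    -- endpoints are mutually equivalent
    (hmin_equiv : ∀ u v, (¬ ∃ z, tgt z = tgt u ∧ Equiv u (comp z (ω (tgt z)))) →
      (¬ ∃ z, tgt z = tgt v ∧ Equiv v (comp z (ω (tgt z)))) →
      src u = src v → tgt u = tgt v → Equiv u v) :
    ∀ v w, tgt v = src w →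
      (¬ ∃ z, tgt z = tgt (comp v w) ∧ Equiv (comp v w) (comp z (ω (tgt z)))) →
      (¬ ∃ z, tgt z = tgt v ∧ Equiv v (comp z (ω (tgt z)))) := by
  intro v w hvw hmin
  rintro ⟨z, hz, hzeq⟩
  apply hmin
  have hzw : tgt z = src w := hz.trans hvw
  refine ⟨comp z w, ?_, ?_⟩
  · rw [htgt_comp z w hzw, htgt_comp v w hvw]
  · -- comp v w ∼ (z·ω)·w
    have e1 : Equiv (comp v w) (comp (comp z (ω (tgt z))) w) :=
      hcomp_congr v (comp z (ω (tgt z))) w hvw hzeq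
    -- tgt (z·ω) = src w
    have hzomega : tgt z = src (ω (tgt z)) := (hω_src (tgt z)).symm
    have ht1 : tgt (comp z (ω (tgt z))) = src w := by
      rw [htgt_comp z _ hzomega, hω_tgt]; exact hzw
    -- (z·ω)·w ∼ (ω·z)·w
    have e2 : Equiv (comp (comp z (ω (tgt z))) w) (comp (comp (ω (src z)) z) w) :=
      hcomp_congr _ _ w ht1 (htransport z)
    -- (ω·z)·w = ω·(z·w)
    have e3 : comp (comp (ω (src z)) z) w = comp (ω (src z)) (comp z w) :=
      hassoc _ z w (hω_tgt (src z)) hzw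
    -- ω·(z·w) ∼ (z·w)·ω_{tgt(z·w)}
    have hs : src (comp z w) = src z := hsrc_comp z w hzw
    have e4 : Equiv (comp (ω (src z)) (comp z w))
        (comp (comp z w) (ω (tgt (comp z w)))) := by
      have := htransport (comp z w)
      rw [hs] at this
      exact hsymm _ _ this
    exact htrans _ _ _ e1 (htrans _ _ _ e2 (e3 ▸ e4))
end
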